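/- Let ρ, σ ≥ 0 and let S : G_ρ → G_σ be subadditive with S(0) = 0 and with right-limit zero at 0, i.e. S(t) → 0 as t ↓ 0. Then S is continuous at 0 if and only if there exists a sequence z_n < 0 with z_n ↑ 0 and S(z_n) → 0; and if S is continuous at 0 (and finite-valued), then S is continuous at every point of G_ρ. -/

import Mathlib

/-!
Write `x \ y := (y - x) / (1 + ρ x)` for the left quotient, so that `x ∘_ρ (x \ y) = y`.
Subadditivity gives `S y ≤ S x ∘_σ S(x \ y)` and `S x ≤ S y ∘_σ S(y \ x)`; both quotients tend
to `0` as `y → x`, so continuity at `0` propagates to every point of `G_ρ`.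

At `0` only the left limit is at stake. From below, `0 = S(h ∘_ρ (h \ 0))` with `h \ 0 ↓ 0` as
`h ↑ 0`, so the right limit controls `S h`. From above, every `h ∈ (z_n, 0)` is `z_n ∘_ρ t` with
`0 < t < z_n \ 0`, so `S h ≤ S(z_n) ∘_σ S t`, and both factors are small once `n` is large.
-/

open Filter Topology Set

def popaMul (ρ x y : ℝ) : ℝ := x + y + ρ * x * y

noncomputable def popaLeftDiv (ρ x y : ℝ) : ℝ := (y - x) / (1 + ρ * x)

def IsPopaSubadditive (ρ σ : ℝ) (S : ℝ → ℝ) : Prop :=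
  ∀ x y : ℝ, 0 < 1 + ρ * x → 0 < 1 + ρ * y → S (popaMul ρ x y) ≤ popaMul σ (S x) (S y)

section PopaGroup

variable {ρ x y : ℝ}

lemma popaMul_popaLeftDiv (hx : 1 + ρ * x ≠ 0) : popaMul ρ x (popaLeftDiv ρ x y) = y := by
  unfold popaMul popaLeftDiv
  rw [show ∀ d, x + d + ρ * x * d = x + (1 + ρ * x) * d from fun d => by ring,
    mul_div_cancel₀ _ hx]
  ring

lemma one_add_mul_popaLeftDiv_pos (hx : 0 < 1 + ρ * x) (hy : 0 < 1 + ρ * y) :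
    0 < 1 + ρ * popaLeftDiv ρ x y := by
  have h : 1 + ρ * popaLeftDiv ρ x y = (1 + ρ * y) / (1 + ρ * x) := by
    unfold popaLeftDiv
    field_simp
    ring
  exact h ▸ div_pos hy hx

lemma eventually_one_add_mul_pos (hx : 0 < 1 + ρ * x) : ∀ᶠ y in 𝓝 x, 0 < 1 + ρ * y :=
  (continuous_const.add (continuous_const.mul continuous_id)).continuousAt.eventually
    (lt_mem_nhds hx)

lemma tendsto_popaLeftDiv_left (hx : 1 + ρ * x ≠ 0) :
    Tendsto (popaLeftDiv ρ x) (𝓝 x) (𝓝 0) := by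
  have h : ContinuousAt (popaLeftDiv ρ x) x := by
    unfold popaLeftDiv
    fun_prop
  simpa [popaLeftDiv] using h.tendsto

lemma tendsto_popaLeftDiv_right (hx : 1 + ρ * x ≠ 0) :
    Tendsto (fun y => popaLeftDiv ρ y x) (𝓝 x) (𝓝 0) := by
  have h : ContinuousAt (fun y => popaLeftDiv ρ y x) x := by
    unfold popaLeftDiv
    exact (continuousAt_const.sub continuousAt_id).div (by fun_prop) hx
  simpa [popaLeftDiv] using h.tendsto

lemma continuous_popaMul (σ : ℝ) : Continuous fun p : ℝ × ℝ => popaMul σ p.1 p.2 := by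
  unfold popaMul
  fun_prop

end PopaGroup

lemma eventually_lt_of_le_popaMul {α : Type*} {l : Filter α} {f g : α → ℝ} {σ b c : ℝ}
    (hg : Tendsto g l (𝓝 0)) (hle : ∀ᶠ a in l, c ≤ popaMul σ (f a) (g a)) (hb : b < c) :
    ∀ᶠ a in l, b < f a := by
  have hden : Tendsto (fun a => 1 + σ * g a) l (𝓝 1) := by
    simpa using (hg.const_mul σ).const_add 1
  have hquot : Tendsto (fun a => (c - g a) / (1 + σ * g a)) l (𝓝 c) := by
    simpa only [sub_zero, div_one, Pi.div_def] using
      (tendsto_const_nhds.sub hg).div hden one_ne_zero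
  filter_upwards [hle, hden.eventually (lt_mem_nhds one_pos),
    hquot.eventually (lt_mem_nhds hb)] with a hca hpos hbq
  refine hbq.trans_le ((div_le_iff₀ hpos).2 ?_)
  unfold popaMul at hca
  linarith

namespace IsPopaSubadditive

variable {ρ σ : ℝ} {S : ℝ → ℝ}

lemma le_popaMul_popaLeftDiv (hS : IsPopaSubadditive ρ σ S) {x y : ℝ}
    (hx : 0 < 1 + ρ * x) (hy : 0 < 1 + ρ * y) :
    S y ≤ popaMul σ (S x) (S (popaLeftDiv ρ x y)) := by
  simpa only [popaMul_popaLeftDiv hx.ne'] using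
    hS x _ hx (one_add_mul_popaLeftDiv_pos hx hy)

theorem continuousAt_of_continuousAt_zero (hS : IsPopaSubadditive ρ σ S) (hS0 : S 0 = 0)
    (hc : ContinuousAt S 0) {x : ℝ} (hx : 0 < 1 + ρ * x) : ContinuousAt S x := by
  have hc0 : Tendsto S (𝓝 0) (𝓝 0) := by simpa only [hS0] using hc.tendsto
  have hnear := eventually_one_add_mul_pos hx
  have hup :
      Tendsto (fun y => popaMul σ (S x) (S (popaLeftDiv ρ x y))) (𝓝 x) (𝓝 (S x)) := by
    simpa [popaMul, Function.comp_def] using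
      ((continuous_popaMul σ).tendsto (S x, 0)).comp
        (tendsto_const_nhds.prodMk_nhds (hc0.comp (tendsto_popaLeftDiv_left hx.ne')))
  refine tendsto_order.2 ⟨fun b hb => ?_, fun b hb => ?_⟩
  · refine eventually_lt_of_le_popaMul (σ := σ)
      (hc0.comp (tendsto_popaLeftDiv_right hx.ne')) ?_ hb
    filter_upwards [hnear] with y hy
    exact hS.le_popaMul_popaLeftDiv hy hx
  · filter_upwards [hnear, hup.eventually (gt_mem_nhds hb)] with y hy hlt
    exact (hS.le_popaMul_popaLeftDiv hx hy).trans_lt hlt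

lemma eventually_nhdsLT_zero_lt (hS : IsPopaSubadditive ρ σ S)
    (hright : Tendsto S (𝓝[>] 0) (𝓝 0)) {z : ℕ → ℝ} (hz : ∀ n, z n < 0)
    (hz0 : Tendsto z atTop (𝓝 0)) (hSz : Tendsto (fun n => S (z n)) atTop (𝓝 0))
    {ε : ℝ} (hε : 0 < ε) : ∀ᶠ h in 𝓝[<] 0, S h < ε := by
  have hsmall : ∀ᶠ p in 𝓝 0 ×ˢ 𝓝 0, popaMul σ p.1 p.2 < ε := by
    rw [← nhds_prod_eq]
    exact (continuous_popaMul σ).continuousAt.eventually (gt_mem_nhds (by simpa [popaMul]))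
  obtain ⟨P, hP, Q, hQ, hPQ⟩ := eventually_prod_iff.1 hsmall
  obtain ⟨δ, hδ, hQδ⟩ := mem_nhdsGT_iff_exists_Ioo_subset.1 (hright.eventually hQ)
  have hnear : ∀ᶠ y in 𝓝 (0 : ℝ), 0 < 1 + ρ * y := eventually_one_add_mul_pos (by simp)
  have hdiv : Tendsto (fun n => popaLeftDiv ρ (z n) 0) atTop (𝓝 0) :=
    (tendsto_popaLeftDiv_right (by simp)).comp hz0
  obtain ⟨n, hPn, hwpos, hwδ⟩ := (hSz.eventually hP |>.and <| hz0.eventually hnear |>.and <|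
    hdiv.eventually (gt_mem_nhds hδ)).exists
  filter_upwards [Ioo_mem_nhdsLT (hz n), nhdsWithin_le_nhds hnear] with h ⟨hwh, hh0⟩ hh
  have ht : popaLeftDiv ρ (z n) h ∈ Ioo 0 δ := by
    refine ⟨div_pos (sub_pos.2 hwh) hwpos, lt_trans ?_ hwδ⟩
    exact div_lt_div_of_pos_right (by linarith) hwpos
  exact (hS.le_popaMul_popaLeftDiv hwpos hh).trans_lt (hPQ hPn (hQδ ht))

lemma tendsto_nhdsLT_zero (hS : IsPopaSubadditive ρ σ S) (hS0 : S 0 = 0)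
    (hright : Tendsto S (𝓝[>] 0) (𝓝 0)) {z : ℕ → ℝ} (hz : ∀ n, z n < 0)
    (hz0 : Tendsto z atTop (𝓝 0)) (hSz : Tendsto (fun n => S (z n)) atTop (𝓝 0)) :
    Tendsto S (𝓝[<] 0) (𝓝 0) := by
  have hnear : ∀ᶠ h in 𝓝[<] (0 : ℝ), 0 < 1 + ρ * h :=
    nhdsWithin_le_nhds (eventually_one_add_mul_pos (by simp))
  have hinv : Tendsto (fun h => popaLeftDiv ρ h 0) (𝓝[<] 0) (𝓝[>] 0) := by
    refine tendsto_nhdsWithin_iff.2 ⟨(tendsto_popaLeftDiv_right (by simp)).mono_left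
      nhdsWithin_le_nhds, ?_⟩
    filter_upwards [self_mem_nhdsWithin, hnear] with h (hh : h < 0) hpos
    exact div_pos (by linarith) hpos
  refine tendsto_order.2
    ⟨fun b hb => ?_, fun ε hε => hS.eventually_nhdsLT_zero_lt hright hz hz0 hSz hε⟩
  refine eventually_lt_of_le_popaMul (σ := σ) (hright.comp hinv) ?_ hb
  filter_upwards [hnear] with h hh
  simpa [hS0] using hS.le_popaMul_popaLeftDiv hh (y := 0) (by simp)

theorem continuousAt_zero_of_tendsto_seq (hS : IsPopaSubadditive ρ σ S) (hS0 : S 0 = 0)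
    (hright : Tendsto S (𝓝[>] 0) (𝓝 0)) {z : ℕ → ℝ} (hz : ∀ n, z n < 0)
    (hz0 : Tendsto z atTop (𝓝 0)) (hSz : Tendsto (fun n => S (z n)) atTop (𝓝 0)) :
    ContinuousAt S 0 := by
  rw [continuousAt_iff_continuous_left'_right', ContinuousWithinAt, ContinuousWithinAt, hS0]
  exact ⟨hS.tendsto_nhdsLT_zero hS0 hright hz hz0 hSz, hright⟩

end IsPopaSubadditive

lemma monotone_neg_one_div_add_one : Monotone fun n : ℕ => -(1 / ((n : ℝ) + 1)) := by
  intro m n hmn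
  dsimp only
  gcongr

lemma tendsto_neg_one_div_add_one :
    Tendsto (fun n : ℕ => -(1 / ((n : ℝ) + 1))) atTop (𝓝 0) := by
  simpa only [neg_zero] using (tendsto_one_div_add_atTop_nhds_zero_nat (𝕜 := ℝ)).neg

theorem popa_subadditive_continuity_criterion_general (ρ σ : ℝ)
    (S : ℝ → ℝ) (hS0 : S 0 = 0)
    (hsub : ∀ x y : ℝ, 0 < 1 + ρ * x → 0 < 1 + ρ * y →
      S (x + y + ρ * x * y) ≤ S x + S y + σ * S x * S y)
    (hright : Tendsto S (𝓝[>] (0 : ℝ)) (𝓝 0)) :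
    (ContinuousAt S 0 ↔
      ∃ z : ℕ → ℝ, (∀ n, z n < 0) ∧ Monotone z ∧
        Tendsto z atTop (𝓝 0) ∧ Tendsto (fun n => S (z n)) atTop (𝓝 0)) ∧
    (ContinuousAt S 0 → ∀ x : ℝ, 0 < 1 + ρ * x → ContinuousAt S x) := by
  have hS : IsPopaSubadditive ρ σ S := hsub
  refine ⟨⟨fun hc => ?_, ?_⟩, fun hc x hx => hS.continuousAt_of_continuousAt_zero hS0 hc hx⟩
  · refine ⟨_, fun n => neg_lt_zero.2 (by positivity), monotone_neg_one_div_add_one,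
      tendsto_neg_one_div_add_one, ?_⟩
    exact hS0 ▸ hc.tendsto.comp tendsto_neg_one_div_add_one
  · rintro ⟨z, hz, -, hz0, hSz⟩
    exact hS.continuousAt_zero_of_tendsto_seq hS0 hright hz hz0 hSz

/-- **Theorem G1.** For `ρ, σ ≥ 0`, let `S : (G_ρ, ∘_ρ) → (G_σ, ∘_σ)`
be subadditive with `S(0) = 0` and `S(t) → 0` as `t ↓ 0`. Then `S` is continuous
at `0` iff there is a sequence `z_n < 0`, `z_n ↑ 0`, with `S(z_n) → 0`; and if
`S` is continuous at `0` then it is continuous at every point of `G_ρ`. -/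
theorem popa_subadditive_continuity_criterion (ρ σ : ℝ) (hρ : 0 ≤ ρ) (hσ : 0 ≤ σ)
    (S : ℝ → ℝ) (hS0 : S 0 = 0)
    (hmap : ∀ x : ℝ, 0 < 1 + ρ * x → 0 < 1 + σ * S x)
    (hsub : ∀ x y : ℝ, 0 < 1 + ρ * x → 0 < 1 + ρ * y →
      S (x + y + ρ * x * y) ≤ S x + S y + σ * S x * S y)
    (hright : Tendsto S (𝓝[>] (0 : ℝ)) (𝓝 0)) :
    (ContinuousAt S 0 ↔
      ∃ z : ℕ → ℝ, (∀ n, z n < 0) ∧ Monotone z ∧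
        Tendsto z atTop (𝓝 0) ∧ Tendsto (fun n => S (z n)) atTop (𝓝 0)) ∧
    (ContinuousAt S 0 → ∀ x : ℝ, 0 < 1 + ρ * x → ContinuousAt S x) :=
  popa_subadditive_continuity_criterion_general ρ σ S hS0 hsub hright
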